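/- Assume: (Gibbs/quasi-independence) there is K ≥ 1 such that μ(C' ∩ σ^{−n} C'') ≤ K μ(C') μ(C'') for every n ≥ 1, every cylinder C' of length n and every cylinder C''; (bounded distortion) there is R > 0 such that for every N ≥ 1 and every cylinder C of length N, the diameter of τ_N(C) in ℝ^d is at most R; (large deviations) there are C₂, c₂ > 0 with μ(|τ_N| > L) ≤ C₂ e^{−c₂ L²/N} for all N ≥ 1 and L > 0; (anticoncentration) μ(τ_N ∈ 𝒬) ≤ C₂ N^{−d/2} for every N ≥ 1 and every unit cube 𝒬 ⊂ ℝ^d. Then there are constants C₄, c₄ > 0 such that for every s ≥ 1, all integers 0 = n₀ < n₁ < … < n_s, and all unit cubes 𝒬₁, …, 𝒬_s ⊂ ℝ^d centered at z₁, …, z_s (with the convention z₀ = 0), μ(τ_{n_j} ∈ 𝒬_j for j = 1, …, s) ≤ ∏_{j=1}^s [ C₄ (n_j − n_{j−1})^{−d/2} e^{−c₄ |z_j − z_{j−1}|²/(n_j − n_{j−1})} ]. -/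

import Mathlib

open MeasureTheory Filter Topology

noncomputable section

/-- The left shift on `Σ = 𝒜^ℕ`. -/
def shift {A : Type*} : (ℕ → A) → (ℕ → A) := fun ω n => ω (n + 1)

/-- The cylinder of length `n` determined by the word `w`. -/
def cylinder {A : Type*} (n : ℕ) (w : ℕ → A) : Set (ℕ → A) :=
  {ω | ∀ i < n, ω i = w i}

/-- Birkhoff sums `τ_N = ∑_{n<N} τ ∘ σ^n` of an `ℝ^d`-valued observable over the shift. -/
def birkhoffShift {A : Type*} {d : ℕ} (τ : (ℕ → A) → EuclideanSpace ℝ (Fin d))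
    (N : ℕ) (ω : ℕ → A) : EuclideanSpace ℝ (Fin d) :=
  ∑ n ∈ Finset.range N, τ (shift^[n] ω)

/-- The closed unit cube in `ℝ^d` centered at `z`. -/
def unitCubeAt {d : ℕ} (z : EuclideanSpace ℝ (Fin d)) : Set (EuclideanSpace ℝ (Fin d)) :=
  {t | ∀ i, z i - 1 / 2 ≤ t i ∧ t i ≤ z i + 1 / 2}

/-- The closed unit cube in `ℝ^d` with corner `a`. -/
def unitCubeCorner {d : ℕ} (a : EuclideanSpace ℝ (Fin d)) : Set (EuclideanSpace ℝ (Fin d)) :=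
  {t | ∀ i, a i ≤ t i ∧ t i ≤ a i + 1}

/-!
Write `τ_{a+b} = τ_a + τ_b ∘ σ^a`. Covering an event that depends on the first `a + b` symbols
by cylinders, the Gibbs property bounds its measure by `K ∑ μ[u] μ[w]`, summed over the pairs of
words `(u, w)` whose concatenated cylinder meets it, and bounded distortion pins down `τ_a` on `[u]`
and `τ_b` on `[w]` up to `R`.

For a single step, if `‖z‖` is large then one of `τ_a`, `τ_b ∘ σ^a` (with `a ≈ b ≈ N / 2`) has
norm at least about `‖z‖ / 2`. Once the word of this big half is fixed, the other half must land in
a box of bounded size, which by anticoncentration has measure `O(N^{-d/2})`; summing over the words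
of the big half then costs the large deviation bound `e^{-c‖z‖²/N}`. For small `‖z‖`
anticoncentration alone suffices. Several steps follow by peeling off the increments
`τ_{n_j} - τ_{n_{j-1}}` one at a time with the Gibbs property.
-/

section Box

variable {d : ℕ}

def box (c : EuclideanSpace ℝ (Fin d)) (r : ℝ) : Set (EuclideanSpace ℝ (Fin d)) :=
  {t | ∀ i, |t i - c i| ≤ r}

lemma unitCubeAt_eq_box (z : EuclideanSpace ℝ (Fin d)) : unitCubeAt z = box z (1 / 2) := by
  ext t
  refine forall_congr' fun i => ?_
  rw [abs_le]
  constructor <;> rintro ⟨h₁, h₂⟩ <;> constructor <;> linarith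

lemma mem_box_of_norm_sub_le {c x y : EuclideanSpace ℝ (Fin d)} {r s : ℝ} (hx : x ∈ box c r)
    (hy : ‖y - x‖ ≤ s) : y ∈ box c (r + s) := by
  intro i
  have hi : |y i - x i| ≤ s := by
    simpa only [PiLp.sub_apply, Real.norm_eq_abs] using (PiLp.norm_apply_le (y - x) i).trans hy
  calc |y i - c i| ≤ |x i - c i| + |y i - x i| := by
        rw [add_comm]; exact abs_sub_le (y i) (x i) (c i)
    _ ≤ r + s := add_le_add (hx i) hi

lemma sub_mem_box_sub {c c' x x' : EuclideanSpace ℝ (Fin d)} {r r' : ℝ} (hx : x ∈ box c r)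
    (hx' : x' ∈ box c' r') : x - x' ∈ box (c - c') (r + r') := by
  intro i
  have h : (x - x') i - (c - c') i = (x i - c i) - (x' i - c' i) := by
    simp only [PiLp.sub_apply]; ring
  rw [h]
  exact (abs_sub _ _).trans (add_le_add (hx i) (hx' i))

lemma norm_sub_le_of_mem_box {c x : EuclideanSpace ℝ (Fin d)} {r : ℝ} (hr : 0 ≤ r)
    (hx : x ∈ box c r) : ‖x - c‖ ≤ √d * r := by
  rw [EuclideanSpace.norm_eq, ← Real.sqrt_sq hr, ← Real.sqrt_mul (Nat.cast_nonneg d)]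
  refine Real.sqrt_le_sqrt ?_
  calc ∑ i, ‖(x - c) i‖ ^ 2 ≤ ∑ _i : Fin d, r ^ 2 := by
        refine Finset.sum_le_sum fun i _ => ?_
        rw [PiLp.sub_apply, Real.norm_eq_abs, sq_abs]
        exact sq_le_sq' (abs_le.mp (hx i)).1 (abs_le.mp (hx i)).2
    _ = d * r ^ 2 := by simp

lemma box_subset_iUnion_unitCubeCorner (c : EuclideanSpace ℝ (Fin d)) {r : ℝ} :
    box c r ⊆ ⋃ k : Fin d → Fin (⌊2 * r⌋₊ + 1),
      unitCubeCorner (WithLp.toLp 2 fun i => c i - r + k i) := by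
  intro t ht
  have hlo : ∀ i, 0 ≤ t i - (c i - r) := fun i => by linarith [(abs_le.mp (ht i)).1]
  have hhi : ∀ i, ⌊t i - (c i - r)⌋₊ < ⌊2 * r⌋₊ + 1 := fun i =>
    Nat.lt_succ_of_le (Nat.floor_le_floor (by linarith [(abs_le.mp (ht i)).2]))
  refine Set.mem_iUnion.mpr ⟨fun i => ⟨_, hhi i⟩, fun i => ⟨?_, ?_⟩⟩
  · linarith [Nat.floor_le (hlo i)]
  · linarith [Nat.lt_floor_add_one (t i - (c i - r))]

lemma mem_box_sub_of_add_mem_box {x p q p' q' : EuclideanSpace ℝ (Fin d)} {ρ R : ℝ}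
    (h : p + q ∈ box x ρ) (hp : ‖p' - p‖ ≤ R) (hq : ‖q' - q‖ ≤ R) :
    q' ∈ box (x - p') (ρ + 2 * R) := by
  have hsum : p' + q' ∈ box x (ρ + 2 * R) := by
    refine mem_box_of_norm_sub_le h ?_
    calc ‖p' + q' - (p + q)‖ = ‖(p' - p) + (q' - q)‖ := by congr 1; abel
      _ ≤ 2 * R := by linarith [norm_add_le (p' - p) (q' - q)]
  intro i
  convert hsum i using 2
  simp only [PiLp.sub_apply, PiLp.add_apply]
  ring

end Box

lemma exp_neg_sq_half_sub_le {c N m : ℝ} (hc : 0 ≤ c) (hN : 1 ≤ N) (hNm : N ≤ m) (r D : ℝ) :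
    Real.exp (-c * (r / 2 - D) ^ 2 / N) ≤
      Real.exp (c * D ^ 2) * Real.exp (-(c / 8) * r ^ 2 / m) := by
  rw [← Real.exp_add, Real.exp_le_exp]
  have hsq : r ^ 2 / 8 - D ^ 2 ≤ (r / 2 - D) ^ 2 := by nlinarith [sq_nonneg (r - 4 * D)]
  have h₁ : c * (r ^ 2 / 8 - D ^ 2) / N ≤ c * (r / 2 - D) ^ 2 / N := by gcongr
  have h₂ : c / 8 * r ^ 2 / m ≤ c / 8 * r ^ 2 / N := by gcongr
  have h₃ : c * D ^ 2 / N ≤ c * D ^ 2 := div_le_self (by positivity) hN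
  have h₄ : c * (r ^ 2 / 8 - D ^ 2) / N = c / 8 * r ^ 2 / N - c * D ^ 2 / N := by ring
  simp only [neg_mul, neg_div]
  linarith

lemma rpow_neg_half_le {d : ℕ} {N m k : ℝ} (hm : 0 < m) (hk : 0 < k) (h : m ≤ k * N) :
    N ^ (-(d : ℝ) / 2) ≤ k ^ ((d : ℝ) / 2) * m ^ (-(d : ℝ) / 2) := by
  have hmk : 0 < m / k := div_pos hm hk
  calc N ^ (-(d : ℝ) / 2) ≤ (m / k) ^ (-(d : ℝ) / 2) :=
        Real.rpow_le_rpow_of_nonpos hmk ((div_le_iff₀' hk).mpr h)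
          (div_nonpos_of_nonpos_of_nonneg (neg_nonpos.mpr d.cast_nonneg) zero_le_two)
    _ = k ^ ((d : ℝ) / 2) * m ^ (-(d : ℝ) / 2) := by
        rw [Real.div_rpow hm.le hk.le, div_eq_mul_inv, ← Real.rpow_neg hk.le, neg_div, neg_neg,
          mul_comm]

lemma Finset.sum_filter_mul_le_of_fiber {α β : Type*} [Fintype α] [Fintype β]
    (P : α → β → Prop) [∀ x, DecidablePred (P x)] [DecidablePred fun x => ∃ y, P x y]
    [DecidablePred fun p : α × β => P p.1 p.2] {f : α → ℝ} {g : β → ℝ} (hf : ∀ x, 0 ≤ f x)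
    {X B : ℝ} (hB₀ : 0 ≤ B) (hX : ∑ x ∈ univ.filter (fun x => ∃ y, P x y), f x ≤ X)
    (hB : ∀ x y, P x y → ∑ y' ∈ univ.filter (P x), g y' ≤ B) :
    ∑ p ∈ univ.filter (fun p : α × β => P p.1 p.2), f p.1 * g p.2 ≤ X * B := by
  have hfiber : ∀ x, ∑ y ∈ univ, (if P x y then f x * g y else 0) =
      f x * ∑ y ∈ univ.filter (P x), g y := fun x => by
    rw [Finset.sum_filter, Finset.mul_sum]
    exact Finset.sum_congr rfl fun y _ => by rw [mul_ite, mul_zero]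
  rw [Finset.sum_filter, ← Finset.univ_product_univ, Finset.sum_product]
  simp only [hfiber]
  rw [← Finset.sum_filter_of_ne (p := fun x => ∃ y, P x y)]
  · calc ∑ x ∈ univ.filter (fun x => ∃ y, P x y), f x * ∑ y ∈ univ.filter (P x), g y
        ≤ ∑ x ∈ univ.filter (fun x => ∃ y, P x y), f x * B := by
          refine Finset.sum_le_sum fun x hx => ?_
          obtain ⟨y, hy⟩ := (Finset.mem_filter.mp hx).2
          exact mul_le_mul_of_nonneg_left (hB x y hy) (hf x)
      _ ≤ X * B := by
          rw [← Finset.sum_mul]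
          exact mul_le_mul_of_nonneg_right hX hB₀
  · intro x _ hx
    by_contra hnone
    push Not at hnone
    simp [Finset.filter_false_of_mem fun y _ => hnone y] at hx

lemma Finset.sum_filter_mul_le_of_fiber' {α β : Type*} [Fintype α] [Fintype β]
    (P : α → β → Prop) [∀ y, DecidablePred (P · y)] [DecidablePred fun y => ∃ x, P x y]
    [DecidablePred fun p : α × β => P p.1 p.2] {f : α → ℝ} {g : β → ℝ} (hg : ∀ y, 0 ≤ g y)
    {X B : ℝ} (hB₀ : 0 ≤ B) (hX : ∑ y ∈ univ.filter (fun y => ∃ x, P x y), g y ≤ X)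
    (hB : ∀ x y, P x y → ∑ x' ∈ univ.filter (P · y), f x' ≤ B) :
    ∑ p ∈ univ.filter (fun p : α × β => P p.1 p.2), f p.1 * g p.2 ≤ X * B := by
  have hswap : ∑ p ∈ univ.filter (fun p : α × β => P p.1 p.2), f p.1 * g p.2 =
      ∑ q ∈ univ.filter (fun q : β × α => P q.2 q.1), g q.1 * f q.2 :=
    Finset.sum_equiv (Equiv.prodComm α β) (by simp) fun _ _ => mul_comm _ _
  rw [hswap]
  convert Finset.sum_filter_mul_le_of_fiber (fun y x => P x y) hg hB₀ hX
    fun y x h => hB x y h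

section Cylinder

variable {A : Type*}

def wordCylinder {n : ℕ} (u : Fin n → A) : Set (ℕ → A) :=
  {ω | ∀ i : Fin n, ω i = u i}

def cylinderHull (n : ℕ) (E : Set (ℕ → A)) : Set (ℕ → A) :=
  {ω | (cylinder n ω ∩ E).Nonempty}

def ConcatMeets {a b : ℕ} (E : Set (ℕ → A)) (u : Fin a → A) (w : Fin b → A) : Prop :=
  (wordCylinder u ∩ shift^[a] ⁻¹' wordCylinder w ∩ E).Nonempty

lemma mem_cylinder_self (n : ℕ) (ω : ℕ → A) : ω ∈ cylinder n ω := fun _ _ => rfl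

lemma mem_wordCylinder_self (n : ℕ) (ω : ℕ → A) : ω ∈ wordCylinder fun i : Fin n => ω i :=
  fun _ => rfl

lemma subset_cylinderHull (n : ℕ) (E : Set (ℕ → A)) : E ⊆ cylinderHull n E :=
  fun ω hω => ⟨ω, mem_cylinder_self n ω, hω⟩

lemma wordCylinder_eq_cylinder {n : ℕ} {u : Fin n → A} {ω : ℕ → A} (hω : ω ∈ wordCylinder u) :
    wordCylinder u = cylinder n ω := by
  ext η
  exact ⟨fun hη i hi => (hη ⟨i, hi⟩).trans (hω ⟨i, hi⟩).symm,
    fun hη i => (hη i i.isLt).trans (hω i)⟩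

lemma wordCylinder_subset_cylinderHull {n : ℕ} {u : Fin n → A} {E : Set (ℕ → A)}
    (h : (wordCylinder u ∩ E).Nonempty) : wordCylinder u ⊆ cylinderHull n E := by
  obtain ⟨ω, hωu, hωE⟩ := h
  intro η hη
  refine ⟨ω, ?_, hωE⟩
  rw [← wordCylinder_eq_cylinder hη]
  exact hωu

lemma wordCylinder_disjoint {n : ℕ} {u u' : Fin n → A} (h : u ≠ u') :
    Disjoint (wordCylinder u) (wordCylinder u') :=
  Set.disjoint_left.mpr fun _ hω hω' => h (funext fun i => (hω i).symm.trans (hω' i))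

lemma shift_iterate_apply (p : ℕ) (ω : ℕ → A) (i : ℕ) : shift^[p] ω i = ω (i + p) := by
  induction p generalizing ω with
  | zero => rfl
  | succ p ih => rw [Function.iterate_succ_apply, ih]; rfl

lemma cylinderHull_add_subset (a b : ℕ) (E : Set (ℕ → A)) :
    cylinderHull (a + b) E ⊆
      ⋃ (u : Fin a → A) (w : Fin b → A) (_ : ConcatMeets E u w),
        wordCylinder u ∩ shift^[a] ⁻¹' wordCylinder w := by
  rintro ω ⟨ω', hω', hω'E⟩
  have hprefix : ω' ∈ wordCylinder fun i : Fin a => ω i := fun i => hω' i (by omega)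
  have hsuffix : shift^[a] ω' ∈ wordCylinder fun i : Fin b => shift^[a] ω i := fun i => by
    simp only [shift_iterate_apply]
    exact hω' _ (by omega)
  simp only [Set.mem_iUnion]
  exact ⟨_, _, ⟨ω', ⟨hprefix, hsuffix⟩, hω'E⟩,
    mem_wordCylinder_self a ω, mem_wordCylinder_self b _⟩

end Cylinder

section BirkhoffSum

variable {A : Type*} {d : ℕ}

def HasBoundedDistortion (τ : (ℕ → A) → EuclideanSpace ℝ (Fin d)) (R : ℝ) : Prop :=
  ∀ N : ℕ, 1 ≤ N → ∀ w : ℕ → A, ∀ ω ∈ cylinder N w, ∀ ω' ∈ cylinder N w,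
    ‖birkhoffShift τ N ω - birkhoffShift τ N ω'‖ ≤ R

lemma birkhoffShift_add (τ : (ℕ → A) → EuclideanSpace ℝ (Fin d)) (a b : ℕ) (ω : ℕ → A) :
    birkhoffShift τ (a + b) ω = birkhoffShift τ a ω + birkhoffShift τ b (shift^[a] ω) := by
  unfold birkhoffShift
  rw [Finset.sum_range_add]
  congr 1
  refine Finset.sum_congr rfl fun i _ => ?_
  rw [add_comm, Function.iterate_add_apply]

lemma birkhoffShift_zero (τ : (ℕ → A) → EuclideanSpace ℝ (Fin d)) (ω : ℕ → A) :
    birkhoffShift τ 0 ω = 0 := by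
  simp [birkhoffShift]

lemma HasBoundedDistortion.norm_sub_le {τ : (ℕ → A) → EuclideanSpace ℝ (Fin d)} {R : ℝ}
    (hD : HasBoundedDistortion τ R) {N : ℕ} (hN : 1 ≤ N) {u : Fin N → A} {ω ω' : ℕ → A}
    (hω : ω ∈ wordCylinder u) (hω' : ω' ∈ wordCylinder u) :
    ‖birkhoffShift τ N ω - birkhoffShift τ N ω'‖ ≤ R := by
  rw [wordCylinder_eq_cylinder hω] at hω'
  exact hD N hN ω ω (mem_cylinder_self N ω) ω' hω'

end BirkhoffSum

section Measure

variable {A : Type*} [MeasurableSpace A] {μ : Measure (ℕ → A)}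

def IsQuasiBernoulli (μ : Measure (ℕ → A)) (K : ℝ) : Prop :=
  ∀ n : ℕ, 1 ≤ n → ∀ w : ℕ → A, ∀ n' : ℕ, ∀ w' : ℕ → A,
    μ (cylinder n w ∩ shift^[n] ⁻¹' cylinder n' w')
      ≤ ENNReal.ofReal K * μ (cylinder n w) * μ (cylinder n' w')

lemma measurableSet_wordCylinder [DiscreteMeasurableSpace A] {n : ℕ} (u : Fin n → A) :
    MeasurableSet (wordCylinder u) := by
  have : wordCylinder u = ⋂ i : Fin n, (fun ω : ℕ → A => ω i) ⁻¹' {u i} := by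
    ext ω; simp [wordCylinder]
  rw [this]
  exact MeasurableSet.iInter fun i => measurable_pi_apply _ (MeasurableSet.of_discrete)

lemma sum_measureReal_wordCylinder_le [DiscreteMeasurableSpace A] [IsFiniteMeasure μ]
    {n : ℕ} (T : Finset (Fin n → A)) {S : Set (ℕ → A)} (h : ∀ u ∈ T, wordCylinder u ⊆ S) :
    ∑ u ∈ T, μ.real (wordCylinder u) ≤ μ.real S := by
  rw [← measureReal_biUnion_finset (fun u _ u' _ huu' => wordCylinder_disjoint huu')
    fun u _ => measurableSet_wordCylinder u]
  exact measureReal_mono (Set.iUnion₂_subset h)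

lemma IsQuasiBernoulli.measureReal_wordCylinder_inter_le [IsProbabilityMeasure μ] {K : ℝ}
    (hG : IsQuasiBernoulli μ K) (hK : 1 ≤ K) {p q : ℕ} (u : Fin p → A) (w : Fin q → A) :
    μ.real (wordCylinder u ∩ shift^[p] ⁻¹' wordCylinder w)
      ≤ K * μ.real (wordCylinder u) * μ.real (wordCylinder w) := by
  rcases (wordCylinder u ∩ shift^[p] ⁻¹' wordCylinder w).eq_empty_or_nonempty with h | ⟨ω, hωu, hωw⟩
  · rw [h, measureReal_empty]
    positivity
  rcases Nat.eq_zero_or_pos p with rfl | hp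
  · have huniv : wordCylinder u = Set.univ := Set.eq_univ_of_forall fun _ i => i.elim0
    simp only [huniv, Set.univ_inter, Function.iterate_zero, Set.preimage_id, probReal_univ,
      mul_one]
    exact le_mul_of_one_le_left measureReal_nonneg hK
  rw [wordCylinder_eq_cylinder hωu, wordCylinder_eq_cylinder hωw]
  have h := ENNReal.toReal_mono (by finiteness) (hG p hp ω q (shift^[p] ω))
  rwa [ENNReal.toReal_mul, ENNReal.toReal_mul, ENNReal.toReal_ofReal (by linarith)] at h

end Measure

section Decomposition

variable {A : Type*} [Fintype A] [MeasurableSpace A] {μ : Measure (ℕ → A)} [IsProbabilityMeasure μ]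
  {K : ℝ}

open scoped Classical in
lemma IsQuasiBernoulli.measureReal_cylinderHull_add_le_sum (hG : IsQuasiBernoulli μ K)
    (hK : 1 ≤ K) (a b : ℕ) (E : Set (ℕ → A)) :
    μ.real (cylinderHull (a + b) E) ≤
      K * ∑ p ∈ Finset.univ.filter (fun p : (Fin a → A) × (Fin b → A) => ConcatMeets E p.1 p.2),
        μ.real (wordCylinder p.1) * μ.real (wordCylinder p.2) := by
  have hcover : cylinderHull (a + b) E ⊆
      ⋃ p ∈ Finset.univ.filter (fun p : (Fin a → A) × (Fin b → A) => ConcatMeets E p.1 p.2),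
        wordCylinder p.1 ∩ shift^[a] ⁻¹' wordCylinder p.2 := by
    intro ω hω
    obtain ⟨u, w, hmeet, hω⟩ : ∃ u w, ConcatMeets E u w ∧
        ω ∈ wordCylinder u ∩ shift^[a] ⁻¹' wordCylinder w := by
      simpa only [Set.mem_iUnion, exists_prop] using cylinderHull_add_subset a b E hω
    exact Set.mem_biUnion (x := (u, w)) (Finset.mem_filter.mpr ⟨Finset.mem_univ _, hmeet⟩) hω
  calc μ.real (cylinderHull (a + b) E)
      ≤ ∑ p ∈ Finset.univ.filter (fun p : (Fin a → A) × (Fin b → A) => ConcatMeets E p.1 p.2),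
          μ.real (wordCylinder p.1 ∩ shift^[a] ⁻¹' wordCylinder p.2) :=
        (measureReal_mono hcover (measure_ne_top _ _)).trans (measureReal_biUnion_finset_le _ _)
    _ ≤ ∑ p ∈ Finset.univ.filter (fun p : (Fin a → A) × (Fin b → A) => ConcatMeets E p.1 p.2),
          K * μ.real (wordCylinder p.1) * μ.real (wordCylinder p.2) :=
        Finset.sum_le_sum fun p _ => hG.measureReal_wordCylinder_inter_le hK p.1 p.2
    _ = _ := by simp only [Finset.mul_sum, mul_assoc]

lemma IsQuasiBernoulli.measureReal_cylinderHull_add_le [DiscreteMeasurableSpace A]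
    (hG : IsQuasiBernoulli μ K) (hK : 1 ≤ K)
    {a b : ℕ} {E X : Set (ℕ → A)} {B : ℝ} (hB₀ : 0 ≤ B)
    (hX : ∀ (u : Fin a → A) (w : Fin b → A), ConcatMeets E u w → wordCylinder u ⊆ X)
    (hY : ∀ (u : Fin a → A) (w : Fin b → A), ConcatMeets E u w → ∃ Y, μ.real Y ≤ B ∧
      ∀ w' : Fin b → A, ConcatMeets E u w' → wordCylinder w' ⊆ Y) :
    μ.real (cylinderHull (a + b) E) ≤ K * (μ.real X * B) := by
  classical
  refine (hG.measureReal_cylinderHull_add_le_sum hK a b E).trans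
    (mul_le_mul_of_nonneg_left ?_ (by linarith))
  refine Finset.sum_filter_mul_le_of_fiber (ConcatMeets E) (f := fun u => μ.real (wordCylinder u))
    (g := fun w => μ.real (wordCylinder w)) (X := μ.real X) (fun _ => measureReal_nonneg) hB₀
    (sum_measureReal_wordCylinder_le (μ := μ) _ fun u hu => ?_) fun u w h => ?_
  · obtain ⟨w, hw⟩ := (Finset.mem_filter.mp hu).2
    exact hX u w hw
  · obtain ⟨Y, hYB, hYsub⟩ := hY u w h
    exact (sum_measureReal_wordCylinder_le _ fun w' hw' =>
      hYsub w' (Finset.mem_filter.mp hw').2).trans hYB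

lemma IsQuasiBernoulli.measureReal_cylinderHull_add_le' [DiscreteMeasurableSpace A]
    (hG : IsQuasiBernoulli μ K) (hK : 1 ≤ K)
    {a b : ℕ} {E X : Set (ℕ → A)} {B : ℝ} (hB₀ : 0 ≤ B)
    (hX : ∀ (u : Fin a → A) (w : Fin b → A), ConcatMeets E u w → wordCylinder w ⊆ X)
    (hY : ∀ (u : Fin a → A) (w : Fin b → A), ConcatMeets E u w → ∃ Y, μ.real Y ≤ B ∧
      ∀ u' : Fin a → A, ConcatMeets E u' w → wordCylinder u' ⊆ Y) :
    μ.real (cylinderHull (a + b) E) ≤ K * (μ.real X * B) := by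
  classical
  refine (hG.measureReal_cylinderHull_add_le_sum hK a b E).trans
    (mul_le_mul_of_nonneg_left ?_ (by linarith))
  refine Finset.sum_filter_mul_le_of_fiber' (ConcatMeets E) (f := fun u => μ.real (wordCylinder u))
    (g := fun w => μ.real (wordCylinder w)) (X := μ.real X) (fun _ => measureReal_nonneg) hB₀
    (sum_measureReal_wordCylinder_le (μ := μ) _ fun w hw => ?_) fun u w h => ?_
  · obtain ⟨u, hu⟩ := (Finset.mem_filter.mp hw).2
    exact hX u w hu
  · obtain ⟨Y, hYB, hYsub⟩ := hY u w h
    exact (sum_measureReal_wordCylinder_le _ fun u' hu' =>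
      hYsub u' (Finset.mem_filter.mp hu').2).trans hYB

end Decomposition

section Hypotheses

variable {A : Type*} [MeasurableSpace A] {d : ℕ}

def HasGaussianTails (μ : Measure (ℕ → A)) (τ : (ℕ → A) → EuclideanSpace ℝ (Fin d))
    (C c : ℝ) : Prop :=
  ∀ N : ℕ, 1 ≤ N → ∀ L : ℝ, 0 < L →
    μ.real {ω | L < ‖birkhoffShift τ N ω‖} ≤ C * Real.exp (-c * L ^ 2 / N)

def HasAnticoncentration (μ : Measure (ℕ → A)) (τ : (ℕ → A) → EuclideanSpace ℝ (Fin d))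
    (C : ℝ) : Prop :=
  ∀ N : ℕ, 1 ≤ N → ∀ a : EuclideanSpace ℝ (Fin d),
    μ.real {ω | birkhoffShift τ N ω ∈ unitCubeCorner a} ≤ C * (N : ℝ) ^ (-(d : ℝ) / 2)

variable {μ : Measure (ℕ → A)} [IsFiniteMeasure μ] {τ : (ℕ → A) → EuclideanSpace ℝ (Fin d)}
  {C c : ℝ}

lemma HasAnticoncentration.measureReal_mem_box_le (hA : HasAnticoncentration μ τ C) {N : ℕ}
    (hN : 1 ≤ N) (x : EuclideanSpace ℝ (Fin d)) (r : ℝ) :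
    μ.real {ω | birkhoffShift τ N ω ∈ box x r}
      ≤ ((⌊2 * r⌋₊ + 1 : ℕ) : ℝ) ^ d * (C * (N : ℝ) ^ (-(d : ℝ) / 2)) := by
  calc μ.real {ω | birkhoffShift τ N ω ∈ box x r}
      ≤ μ.real (⋃ k : Fin d → Fin (⌊2 * r⌋₊ + 1), {ω | birkhoffShift τ N ω ∈
          unitCubeCorner (WithLp.toLp 2 fun i => x i - r + k i)}) :=
        measureReal_mono (fun ω hω => by
          simpa only [Set.mem_iUnion, Set.mem_ofPred_eq] using
            box_subset_iUnion_unitCubeCorner x hω)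
          (measure_ne_top _ _)
    _ ≤ ∑ k : Fin d → Fin (⌊2 * r⌋₊ + 1), μ.real {ω | birkhoffShift τ N ω ∈
          unitCubeCorner (WithLp.toLp 2 fun i => x i - r + k i)} :=
        measureReal_iUnion_fintype_le _
    _ ≤ ∑ _k : Fin d → Fin (⌊2 * r⌋₊ + 1), C * (N : ℝ) ^ (-(d : ℝ) / 2) :=
        Finset.sum_le_sum fun k _ => hA N hN _
    _ = _ := by simp

lemma HasGaussianTails.measureReal_mem_box_le (hT : HasGaussianTails μ τ C c) (hc : 0 ≤ c)
    {m : ℕ} (hm : 1 ≤ m) (x : EuclideanSpace ℝ (Fin d)) {ρ D : ℝ} (hρ : 0 ≤ ρ)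
    (hD : √d * ρ / 2 ≤ D) (hfar : 2 * D < ‖x‖) :
    μ.real {ω | birkhoffShift τ m ω ∈ box x ρ} ≤
      C * Real.exp (c * D ^ 2) * Real.exp (-(c / 8) * ‖x‖ ^ 2 / m) := by
  have hsub : {ω | birkhoffShift τ m ω ∈ box x ρ} ⊆
      {ω | ‖x‖ / 2 - D < ‖birkhoffShift τ m ω‖} := fun ω hω => by
    have h₁ := norm_sub_le_of_mem_box hρ hω
    have h₂ := norm_sub_norm_le x (birkhoffShift τ m ω)
    rw [norm_sub_rev] at h₂
    show ‖x‖ / 2 - D < _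
    linarith
  calc μ.real {ω | birkhoffShift τ m ω ∈ box x ρ}
      ≤ C * Real.exp (-c * (‖x‖ / 2 - D) ^ 2 / m) :=
        (measureReal_mono hsub (measure_ne_top _ _)).trans (hT m hm _ (by linarith))
    _ ≤ C * (Real.exp (c * D ^ 2) * Real.exp (-(c / 8) * ‖x‖ ^ 2 / m)) := by
        have hC : 0 ≤ C := by
          have h := hT m hm 1 one_pos
          exact nonneg_of_mul_nonneg_left (measureReal_nonneg.trans h) (Real.exp_pos _)
        gcongr
        exact exp_neg_sq_half_sub_le hc (by exact_mod_cast hm) le_rfl _ _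
    _ = _ := by ring

lemma HasAnticoncentration.measureReal_mem_box_le_of_near (hA : HasAnticoncentration μ τ C)
    (hC : 0 ≤ C) (hc : 0 ≤ c) {m : ℕ} (hm : 1 ≤ m) (x : EuclideanSpace ℝ (Fin d)) (ρ : ℝ)
    {D : ℝ} (hnear : ‖x‖ ≤ 4 * D) :
    μ.real {ω | birkhoffShift τ m ω ∈ box x ρ} ≤
      ((⌊2 * ρ⌋₊ + 1 : ℕ) : ℝ) ^ d * C * Real.exp (2 * c * D ^ 2) *
        ((m : ℝ) ^ (-(d : ℝ) / 2) * Real.exp (-(c / 8) * ‖x‖ ^ 2 / m)) := by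
  have hm₁ : (1 : ℝ) ≤ m := by exact_mod_cast hm
  have hexp : 1 ≤ Real.exp (2 * c * D ^ 2) * Real.exp (-(c / 8) * ‖x‖ ^ 2 / m) := by
    rw [← Real.exp_add, Real.one_le_exp_iff]
    have h₁ : ‖x‖ ^ 2 / m ≤ ‖x‖ ^ 2 := div_le_self (by positivity) hm₁
    have h₂ : ‖x‖ ^ 2 ≤ 16 * D ^ 2 := by nlinarith [norm_nonneg x]
    have h₃ : -(c / 8) * ‖x‖ ^ 2 / m = -(c / 8 * (‖x‖ ^ 2 / m)) := by ring
    rw [h₃]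
    nlinarith
  calc μ.real {ω | birkhoffShift τ m ω ∈ box x ρ}
      ≤ ((⌊2 * ρ⌋₊ + 1 : ℕ) : ℝ) ^ d * (C * (m : ℝ) ^ (-(d : ℝ) / 2)) :=
        hA.measureReal_mem_box_le hm x ρ
    _ ≤ ((⌊2 * ρ⌋₊ + 1 : ℕ) : ℝ) ^ d * (C * (m : ℝ) ^ (-(d : ℝ) / 2)) *
          (Real.exp (2 * c * D ^ 2) * Real.exp (-(c / 8) * ‖x‖ ^ 2 / m)) :=
        le_mul_of_one_le_right (by positivity) hexp
    _ = _ := by ring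

end Hypotheses

section Chain

variable {A : Type*} [Fintype A] [MeasurableSpace A] [DiscreteMeasurableSpace A]
  {μ : Measure (ℕ → A)} [IsProbabilityMeasure μ] {d : ℕ}
  {τ : (ℕ → A) → EuclideanSpace ℝ (Fin d)} {K R : ℝ}

lemma IsQuasiBernoulli.measureReal_cylinderHull_le_prod (hG : IsQuasiBernoulli μ K) (hK : 1 ≤ K)
    (hD : HasBoundedDistortion τ R) {s : ℕ} {n : ℕ → ℕ} (hn : ∀ j < s, n j < n (j + 1))
    {z : ℕ → EuclideanSpace ℝ (Fin d)} {r : ℝ} {E : Set (ℕ → A)}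
    (hE : ∀ ω ∈ E, ∀ j ≤ s, birkhoffShift τ (n j) ω ∈ box (z j) r) :
    ∀ k ≤ s, μ.real (cylinderHull (n k) E) ≤ μ.real (cylinderHull (n 0) E) *
      ∏ j ∈ Finset.Icc 1 k, K * μ.real {η | birkhoffShift τ (n j - n (j - 1)) η ∈
        box (z j - z (j - 1)) (2 * r + R)} := by
  intro k
  induction k with
  | zero => simp
  | succ k ih =>
    intro hks
    set b := n (k + 1) - n k
    have hb : 1 ≤ b := Nat.le_sub_of_add_le' (hn k hks)
    have hab : n k + b = n (k + 1) := Nat.add_sub_of_le (hn k hks).le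
    set Y := {η | birkhoffShift τ b η ∈ box (z (k + 1) - z k) (2 * r + R)}
    have hstep : μ.real (cylinderHull (n (k + 1)) E) ≤
        K * (μ.real (cylinderHull (n k) E) * μ.real Y) := by
      rw [← hab]
      refine hG.measureReal_cylinderHull_add_le hK measureReal_nonneg
        (fun u w ⟨ω, ⟨hωu, _⟩, hωE⟩ => wordCylinder_subset_cylinderHull ⟨ω, hωu, hωE⟩)
        fun u w _ => ⟨Y, le_rfl, fun w' ⟨ω, ⟨_, hωw⟩, hωE⟩ η hη => ?_⟩
      have hincr : birkhoffShift τ b (shift^[n k] ω) ∈ box (z (k + 1) - z k) (r + r) := by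
        rw [eq_sub_of_add_eq' ((birkhoffShift_add τ (n k) b ω).symm), hab]
        exact sub_mem_box_sub (hE ω hωE (k + 1) hks) (hE ω hωE k (by omega))
      show birkhoffShift τ b η ∈ box _ (2 * r + R)
      rw [two_mul]
      exact mem_box_of_norm_sub_le hincr (hD.norm_sub_le hb hη hωw)
    calc μ.real (cylinderHull (n (k + 1)) E)
        ≤ K * (μ.real (cylinderHull (n k) E) * μ.real Y) := hstep
      _ ≤ K * ((μ.real (cylinderHull (n 0) E) *
            ∏ j ∈ Finset.Icc 1 k, K * μ.real {η | birkhoffShift τ (n j - n (j - 1)) η ∈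
              box (z j - z (j - 1)) (2 * r + R)}) * μ.real Y) := by
          gcongr
          exact ih (by omega)
      _ = _ := by
          rw [Finset.prod_Icc_succ_top (by omega), Nat.add_sub_cancel]
          ring

lemma IsQuasiBernoulli.measureReal_le_prod (hG : IsQuasiBernoulli μ K) (hK : 1 ≤ K)
    (hD : HasBoundedDistortion τ R) {s : ℕ} {n : ℕ → ℕ} (hn : ∀ j < s, n j < n (j + 1))
    {z : ℕ → EuclideanSpace ℝ (Fin d)} {r : ℝ} {E : Set (ℕ → A)}
    (hE : ∀ ω ∈ E, ∀ j ≤ s, birkhoffShift τ (n j) ω ∈ box (z j) r) :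
    μ.real E ≤ ∏ j ∈ Finset.Icc 1 s, K * μ.real {η | birkhoffShift τ (n j - n (j - 1)) η ∈
      box (z j - z (j - 1)) (2 * r + R)} :=
  calc μ.real E ≤ μ.real (cylinderHull (n s) E) :=
        measureReal_mono (subset_cylinderHull _ E) (measure_ne_top _ _)
    _ ≤ _ := hG.measureReal_cylinderHull_le_prod hK hD hn hE s le_rfl
    _ ≤ _ := mul_le_of_le_one_left (Finset.prod_nonneg fun _ _ => by positivity)
        measureReal_le_one

end Chain

section OneStep

variable {A : Type*} [Fintype A] [MeasurableSpace A] [DiscreteMeasurableSpace A]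
  {μ : Measure (ℕ → A)} [IsProbabilityMeasure μ] {d : ℕ}
  {τ : (ℕ → A) → EuclideanSpace ℝ (Fin d)} {K R C c : ℝ}

lemma measureReal_mem_box_and_le_norm_prefix_le (hG : IsQuasiBernoulli μ K) (hK : 1 ≤ K)
    (hD : HasBoundedDistortion τ R) (hT : HasGaussianTails μ τ C c)
    (hA : HasAnticoncentration μ τ C) (hC : 0 ≤ C) {a b : ℕ} (ha : 1 ≤ a) (hb : 1 ≤ b)
    (x : EuclideanSpace ℝ (Fin d)) (ρ : ℝ) {ℓ : ℝ} (hℓ : 0 < ℓ - R - 1) :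
    μ.real {ω | birkhoffShift τ (a + b) ω ∈ box x ρ ∧ ℓ ≤ ‖birkhoffShift τ a ω‖} ≤
      K * (C * Real.exp (-c * (ℓ - R - 1) ^ 2 / a) *
        (((⌊2 * (ρ + 2 * R)⌋₊ + 1 : ℕ) : ℝ) ^ d * (C * (b : ℝ) ^ (-(d : ℝ) / 2)))) := by
  set E := {ω | birkhoffShift τ (a + b) ω ∈ box x ρ ∧ ℓ ≤ ‖birkhoffShift τ a ω‖}
  calc μ.real E ≤ μ.real (cylinderHull (a + b) E) :=
        measureReal_mono (subset_cylinderHull _ E) (measure_ne_top _ _)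
    _ ≤ K * (μ.real {ω | ℓ - R - 1 < ‖birkhoffShift τ a ω‖} *
          (((⌊2 * (ρ + 2 * R)⌋₊ + 1 : ℕ) : ℝ) ^ d * (C * (b : ℝ) ^ (-(d : ℝ) / 2)))) := by
        refine hG.measureReal_cylinderHull_add_le hK (by positivity) ?_ ?_
        · rintro u w ⟨ω, ⟨hωu, -⟩, -, hωℓ⟩ η hη
          have h₁ := hD.norm_sub_le ha hωu hη
          have h₂ := norm_sub_norm_le (birkhoffShift τ a ω) (birkhoffShift τ a η)
          show ℓ - R - 1 < ‖birkhoffShift τ a η‖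
          linarith
        · rintro u w ⟨ω₀, ⟨hω₀u, -⟩, -⟩
          refine ⟨{η | birkhoffShift τ b η ∈ box (x - birkhoffShift τ a ω₀) (ρ + 2 * R)},
            hA.measureReal_mem_box_le hb _ _, ?_⟩
          rintro w' ⟨ω, ⟨hωu, hωw⟩, hωx, -⟩ η hη
          rw [birkhoffShift_add] at hωx
          exact mem_box_sub_of_add_mem_box hωx (hD.norm_sub_le ha hω₀u hωu)
            (hD.norm_sub_le hb hη hωw)
    _ ≤ _ := by
        gcongr
        exact hT a ha _ hℓ

lemma measureReal_mem_box_and_le_norm_suffix_le (hG : IsQuasiBernoulli μ K) (hK : 1 ≤ K)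
    (hD : HasBoundedDistortion τ R) (hT : HasGaussianTails μ τ C c)
    (hA : HasAnticoncentration μ τ C) (hC : 0 ≤ C) {a b : ℕ} (ha : 1 ≤ a) (hb : 1 ≤ b)
    (x : EuclideanSpace ℝ (Fin d)) (ρ : ℝ) {ℓ : ℝ} (hℓ : 0 < ℓ - R - 1) :
    μ.real {ω | birkhoffShift τ (a + b) ω ∈ box x ρ ∧ ℓ ≤ ‖birkhoffShift τ b (shift^[a] ω)‖} ≤
      K * (C * Real.exp (-c * (ℓ - R - 1) ^ 2 / b) *
        (((⌊2 * (ρ + 2 * R)⌋₊ + 1 : ℕ) : ℝ) ^ d * (C * (a : ℝ) ^ (-(d : ℝ) / 2)))) := by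
  set E := {ω | birkhoffShift τ (a + b) ω ∈ box x ρ ∧ ℓ ≤ ‖birkhoffShift τ b (shift^[a] ω)‖}
  calc μ.real E ≤ μ.real (cylinderHull (a + b) E) :=
        measureReal_mono (subset_cylinderHull _ E) (measure_ne_top _ _)
    _ ≤ K * (μ.real {η | ℓ - R - 1 < ‖birkhoffShift τ b η‖} *
          (((⌊2 * (ρ + 2 * R)⌋₊ + 1 : ℕ) : ℝ) ^ d * (C * (a : ℝ) ^ (-(d : ℝ) / 2)))) := by
        refine hG.measureReal_cylinderHull_add_le' hK (by positivity) ?_ ?_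
        · rintro u w ⟨ω, ⟨-, hωw⟩, -, hωℓ⟩ η hη
          have h₁ := hD.norm_sub_le hb hωw hη
          have h₂ := norm_sub_norm_le (birkhoffShift τ b (shift^[a] ω)) (birkhoffShift τ b η)
          show ℓ - R - 1 < ‖birkhoffShift τ b η‖
          linarith
        · rintro u w ⟨ω₀, ⟨-, hω₀w⟩, -⟩
          refine ⟨{η | birkhoffShift τ a η ∈
              box (x - birkhoffShift τ b (shift^[a] ω₀)) (ρ + 2 * R)},
            hA.measureReal_mem_box_le ha _ _, ?_⟩
          rintro u' ⟨ω, ⟨hωu, hωw⟩, hωx, -⟩ η hη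
          rw [birkhoffShift_add, add_comm] at hωx
          exact mem_box_sub_of_add_mem_box hωx (hD.norm_sub_le hb hω₀w hωw)
            (hD.norm_sub_le ha hη hωu)
    _ ≤ _ := by
        gcongr
        exact hT b hb _ hℓ

lemma measureReal_mem_box_le_of_split (hG : IsQuasiBernoulli μ K) (hK : 1 ≤ K)
    (hD : HasBoundedDistortion τ R) (hT : HasGaussianTails μ τ C c)
    (hA : HasAnticoncentration μ τ C) (hC : 0 ≤ C) {a b : ℕ} (ha : 1 ≤ a) (hb : 1 ≤ b)
    (x : EuclideanSpace ℝ (Fin d)) {ρ : ℝ} (hρ : 0 ≤ ρ)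
    (hfar : 2 * (√d * ρ / 2 + R + 1) < ‖x‖) :
    μ.real {ω | birkhoffShift τ (a + b) ω ∈ box x ρ} ≤
      K * (((⌊2 * (ρ + 2 * R)⌋₊ + 1 : ℕ) : ℝ) ^ d * C * C *
        (Real.exp (-c * (‖x‖ / 2 - (√d * ρ / 2 + R + 1)) ^ 2 / a) * (b : ℝ) ^ (-(d : ℝ) / 2) +
          Real.exp (-c * (‖x‖ / 2 - (√d * ρ / 2 + R + 1)) ^ 2 / b) *
            (a : ℝ) ^ (-(d : ℝ) / 2))) := by
  -- `‖τ_{a+b} ω‖ ≥ ‖x‖ - √d ρ = 2ℓ`, so one of the two halves has norm at least `ℓ`.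
  set ℓ := (‖x‖ - √d * ρ) / 2
  have hℓ : ℓ - R - 1 = ‖x‖ / 2 - (√d * ρ / 2 + R + 1) := by ring
  have hcover : {ω | birkhoffShift τ (a + b) ω ∈ box x ρ} ⊆
      {ω | birkhoffShift τ (a + b) ω ∈ box x ρ ∧ ℓ ≤ ‖birkhoffShift τ a ω‖} ∪
        {ω | birkhoffShift τ (a + b) ω ∈ box x ρ ∧ ℓ ≤ ‖birkhoffShift τ b (shift^[a] ω)‖} := by
    intro ω hω
    have h₁ := norm_sub_le_of_mem_box hρ hω
    have h₂ : ‖x‖ ≤ ‖birkhoffShift τ (a + b) ω - x‖ + (‖birkhoffShift τ a ω‖ +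
        ‖birkhoffShift τ b (shift^[a] ω)‖) := by
      calc ‖x‖ = ‖-(birkhoffShift τ (a + b) ω - x) +
            (birkhoffShift τ a ω + birkhoffShift τ b (shift^[a] ω))‖ := by
            rw [← birkhoffShift_add]; abel_nf
        _ ≤ _ := (norm_add_le _ _).trans (by rw [norm_neg]; gcongr; exact norm_add_le _ _)
    by_cases hpre : ℓ ≤ ‖birkhoffShift τ a ω‖
    · exact Or.inl ⟨hω, hpre⟩
    · exact Or.inr ⟨hω, by linarith⟩
  have hpos : 0 < ℓ - R - 1 := by rw [hℓ]; linarith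
  calc μ.real {ω | birkhoffShift τ (a + b) ω ∈ box x ρ}
      ≤ μ.real {ω | birkhoffShift τ (a + b) ω ∈ box x ρ ∧ ℓ ≤ ‖birkhoffShift τ a ω‖} +
        μ.real {ω | birkhoffShift τ (a + b) ω ∈ box x ρ ∧
          ℓ ≤ ‖birkhoffShift τ b (shift^[a] ω)‖} :=
        (measureReal_mono hcover (measure_ne_top _ _)).trans (measureReal_union_le _ _)
    _ ≤ _ := add_le_add
        (measureReal_mem_box_and_le_norm_prefix_le hG hK hD hT hA hC ha hb x ρ hpos)
        (measureReal_mem_box_and_le_norm_suffix_le hG hK hD hT hA hC ha hb x ρ hpos)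
    _ = _ := by rw [hℓ]; ring

lemma measureReal_mem_box_le_of_two_le (hG : IsQuasiBernoulli μ K) (hK : 1 ≤ K)
    (hD : HasBoundedDistortion τ R) (hT : HasGaussianTails μ τ C c)
    (hA : HasAnticoncentration μ τ C) (hC : 0 ≤ C) (hc : 0 ≤ c) {m : ℕ} (hm : 2 ≤ m)
    (x : EuclideanSpace ℝ (Fin d)) {ρ : ℝ} (hρ : 0 ≤ ρ)
    (hfar : 2 * (√d * ρ / 2 + R + 1) < ‖x‖) :
    μ.real {ω | birkhoffShift τ m ω ∈ box x ρ} ≤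
      2 * K * ((⌊2 * (ρ + 2 * R)⌋₊ + 1 : ℕ) : ℝ) ^ d * C * C * 3 ^ ((d : ℝ) / 2) *
        Real.exp (c * (√d * ρ / 2 + R + 1) ^ 2) *
          ((m : ℝ) ^ (-(d : ℝ) / 2) * Real.exp (-(c / 8) * ‖x‖ ^ 2 / m)) := by
  set a := m / 2
  set b := m - m / 2
  have ha : 1 ≤ a := by omega
  have hb : 1 ≤ b := by omega
  have hm₀ : (0 : ℝ) < m := by positivity
  have hma : (m : ℝ) ≤ 3 * a := by norm_cast; omega
  have hmb : (m : ℝ) ≤ 3 * b := by norm_cast; omega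
  have ham : (a : ℝ) ≤ m := by norm_cast; omega
  have hbm : (b : ℝ) ≤ m := by norm_cast; omega
  have hK₀ : 0 ≤ K := by linarith
  have hsplit := measureReal_mem_box_le_of_split hG hK hD hT hA hC ha hb x hρ hfar
  rw [show a + b = m by omega] at hsplit
  refine hsplit.trans ?_
  grw [exp_neg_sq_half_sub_le hc (by exact_mod_cast ha) ham,
    exp_neg_sq_half_sub_le hc (by exact_mod_cast hb) hbm,
    rpow_neg_half_le hm₀ (by norm_num) hma, rpow_neg_half_le hm₀ (by norm_num) hmb]
  exact le_of_eq (by ring)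

theorem exists_measureReal_mem_box_le (hG : IsQuasiBernoulli μ K) (hK : 1 ≤ K)
    (hD : HasBoundedDistortion τ R) (hR : 0 ≤ R) (hT : HasGaussianTails μ τ C c)
    (hA : HasAnticoncentration μ τ C) (hC : 0 < C) (hc : 0 ≤ c) {ρ : ℝ} (hρ : 0 ≤ ρ) :
    ∃ C' : ℝ, 0 < C' ∧ ∀ m : ℕ, 1 ≤ m → ∀ x : EuclideanSpace ℝ (Fin d),
      μ.real {ω | birkhoffShift τ m ω ∈ box x ρ} ≤
        C' * ((m : ℝ) ^ (-(d : ℝ) / 2) * Real.exp (-(c / 8) * ‖x‖ ^ 2 / m)) := by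
  set D := √d * ρ / 2 + R + 1 with hD_def
  have hD₀ : √d * ρ / 2 < D := by rw [hD_def]; linarith
  have hD₁ : 0 < D := by linarith [show 0 ≤ √d * ρ by positivity]
  have hK₀ : 0 < K := by linarith
  set C_near := ((⌊2 * ρ⌋₊ + 1 : ℕ) : ℝ) ^ d * C * Real.exp (2 * c * D ^ 2)
  set C_tail := C * Real.exp (c * D ^ 2)
  set C_split := 2 * K * ((⌊2 * (ρ + 2 * R)⌋₊ + 1 : ℕ) : ℝ) ^ d * C * C * 3 ^ ((d : ℝ) / 2) *
    Real.exp (c * D ^ 2)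
  refine ⟨C_near + C_tail + C_split, by positivity, fun m hm x => ?_⟩
  obtain ⟨h_near, h_tail, h_split⟩ : 0 < C_near ∧ 0 < C_tail ∧ 0 < C_split :=
    ⟨by positivity, by positivity, by positivity⟩
  rcases le_or_gt ‖x‖ (4 * D) with hnear | hfar
  · refine (hA.measureReal_mem_box_le_of_near hC.le hc hm x ρ hnear).trans ?_
    gcongr
    linarith
  rcases (show m = 1 ∨ 2 ≤ m by omega) with rfl | hm₂
  · refine (hT.measureReal_mem_box_le (D := D) hc le_rfl x hρ hD₀.le (by linarith)).trans ?_
    rw [Nat.cast_one, Real.one_rpow, one_mul]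
    gcongr
    linarith
  · refine (measureReal_mem_box_le_of_two_le hG hK hD hT hA hC.le hc hm₂ x hρ
      (by linarith)).trans ?_
    gcongr
    linarith

end OneStep

theorem stmt_19_general
    {A : Type*} [Fintype A] [MeasurableSpace A] [DiscreteMeasurableSpace A]
    (μ : Measure (ℕ → A)) [IsProbabilityMeasure μ]
    {d : ℕ}
    (τ : (ℕ → A) → EuclideanSpace ℝ (Fin d))
    (K : ℝ) (hK : 1 ≤ K)
    -- Gibbs / quasi-independence property
    (hGibbs : ∀ n : ℕ, 1 ≤ n → ∀ w : ℕ → A, ∀ n' : ℕ, ∀ w' : ℕ → A,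
      μ (cylinder n w ∩ shift^[n] ⁻¹' cylinder n' w')
        ≤ ENNReal.ofReal K * μ (cylinder n w) * μ (cylinder n' w'))
    (R : ℝ) (hR : 0 < R)
    -- bounded distortion: τ_N has diameter ≤ R on length-N cylinders
    (hdist : ∀ N : ℕ, 1 ≤ N → ∀ w : ℕ → A, ∀ ω ∈ cylinder N w, ∀ ω' ∈ cylinder N w,
      ‖birkhoffShift τ N ω - birkhoffShift τ N ω'‖ ≤ R)
    (C₂ c₂ : ℝ) (hC₂ : 0 < C₂) (hc₂ : 0 < c₂)
    -- large deviations
    (hLD : ∀ N : ℕ, 1 ≤ N → ∀ L : ℝ, 0 < L →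
      (μ {ω | L < ‖birkhoffShift τ N ω‖}).toReal ≤ C₂ * Real.exp (-c₂ * L ^ 2 / N))
    -- anticoncentration
    (hanti : ∀ N : ℕ, 1 ≤ N → ∀ a : EuclideanSpace ℝ (Fin d),
      (μ {ω | birkhoffShift τ N ω ∈ unitCubeCorner a}).toReal
        ≤ C₂ * (N : ℝ) ^ (-(d : ℝ) / 2)) :
    ∃ C₄ : ℝ, 0 < C₄ ∧ ∃ c₄ : ℝ, 0 < c₄ ∧
      ∀ s : ℕ, 1 ≤ s →
      ∀ n : ℕ → ℕ, n 0 = 0 → (∀ j : ℕ, j < s → n j < n (j + 1)) →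
      ∀ z : ℕ → EuclideanSpace ℝ (Fin d), z 0 = 0 →
        (μ {ω | ∀ j ∈ Finset.Icc 1 s, birkhoffShift τ (n j) ω ∈ unitCubeAt (z j)}).toReal
          ≤ ∏ j ∈ Finset.Icc 1 s,
              C₄ * ((n j - n (j - 1) : ℕ) : ℝ) ^ (-(d : ℝ) / 2) *
                Real.exp (-c₄ * ‖z j - z (j - 1)‖ ^ 2 / ((n j - n (j - 1) : ℕ) : ℝ)) := by
  obtain ⟨C, hC, hbox⟩ := exists_measureReal_mem_box_le hGibbs hK hdist hR.le hLD hanti hC₂ hc₂.le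
    (ρ := 2 * (1 / 2) + R) (by positivity)
  refine ⟨K * C, by positivity, c₂ / 8, by positivity, fun s _ n hn₀ hn z hz₀ => ?_⟩
  set E := {ω | ∀ j ∈ Finset.Icc 1 s, birkhoffShift τ (n j) ω ∈ unitCubeAt (z j)}
  have hE : ∀ ω ∈ E, ∀ j ≤ s, birkhoffShift τ (n j) ω ∈ box (z j) (1 / 2) := by
    intro ω hω j hj
    rcases Nat.eq_zero_or_pos j with rfl | hj₀
    · rw [hn₀, hz₀, birkhoffShift_zero]
      intro i
      norm_num
    · rw [← unitCubeAt_eq_box]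
      exact hω j (Finset.mem_Icc.mpr ⟨hj₀, hj⟩)
  refine (IsQuasiBernoulli.measureReal_le_prod hGibbs hK hdist hn hE).trans
    (Finset.prod_le_prod (fun _ _ => by positivity) fun j hj => ?_)
  obtain ⟨hj₁, hjs⟩ := Finset.mem_Icc.mp hj
  have hstep : 1 ≤ n j - n (j - 1) := by
    have := hn (j - 1) (by omega)
    rw [Nat.sub_add_cancel hj₁] at this
    omega
  exact (mul_le_mul_of_nonneg_left (hbox _ hstep _) (by positivity)).trans_eq (by ring)

/-- Lemma A.4 of the paper: under the Gibbs (quasi-independence) property, bounded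
distortion on cylinders, subgaussian large deviations and `N^{-d/2}` anticoncentration,
the joint anticoncentration large deviation bound of any order `s` holds:
`μ(τ_{n_j} ∈ 𝒬_j, j ≤ s) ≤ ∏_j C₄ (n_j − n_{j−1})^{−d/2} e^{−c₄|z_j − z_{j−1}|²/(n_j − n_{j−1})}`. -/
theorem stmt_19
    {A : Type*} [Fintype A] [MeasurableSpace A] [DiscreteMeasurableSpace A]
    (μ : Measure (ℕ → A)) [IsProbabilityMeasure μ]
    (hshift : MeasurePreserving (shift : (ℕ → A) → ℕ → A) μ μ)
    {d : ℕ}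
    (τ : (ℕ → A) → EuclideanSpace ℝ (Fin d)) (hτm : Measurable τ)
    (hτb : ∃ M, ∀ ω, ‖τ ω‖ ≤ M)
    (K : ℝ) (hK : 1 ≤ K)
    -- Gibbs / quasi-independence property
    (hGibbs : ∀ n : ℕ, 1 ≤ n → ∀ w : ℕ → A, ∀ n' : ℕ, ∀ w' : ℕ → A,
      μ (cylinder n w ∩ shift^[n] ⁻¹' cylinder n' w')
        ≤ ENNReal.ofReal K * μ (cylinder n w) * μ (cylinder n' w'))
    (R : ℝ) (hR : 0 < R)
    -- bounded distortion: τ_N has diameter ≤ R on length-N cylinders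
    (hdist : ∀ N : ℕ, 1 ≤ N → ∀ w : ℕ → A, ∀ ω ∈ cylinder N w, ∀ ω' ∈ cylinder N w,
      ‖birkhoffShift τ N ω - birkhoffShift τ N ω'‖ ≤ R)
    (C₂ c₂ : ℝ) (hC₂ : 0 < C₂) (hc₂ : 0 < c₂)
    -- large deviations
    (hLD : ∀ N : ℕ, 1 ≤ N → ∀ L : ℝ, 0 < L →
      (μ {ω | L < ‖birkhoffShift τ N ω‖}).toReal ≤ C₂ * Real.exp (-c₂ * L ^ 2 / N))
    -- anticoncentration
    (hanti : ∀ N : ℕ, 1 ≤ N → ∀ a : EuclideanSpace ℝ (Fin d),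
      (μ {ω | birkhoffShift τ N ω ∈ unitCubeCorner a}).toReal
        ≤ C₂ * (N : ℝ) ^ (-(d : ℝ) / 2)) :
    ∃ C₄ : ℝ, 0 < C₄ ∧ ∃ c₄ : ℝ, 0 < c₄ ∧
      ∀ s : ℕ, 1 ≤ s →
      ∀ n : ℕ → ℕ, n 0 = 0 → (∀ j : ℕ, j < s → n j < n (j + 1)) →
      ∀ z : ℕ → EuclideanSpace ℝ (Fin d), z 0 = 0 →
        (μ {ω | ∀ j ∈ Finset.Icc 1 s, birkhoffShift τ (n j) ω ∈ unitCubeAt (z j)}).toReal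
          ≤ ∏ j ∈ Finset.Icc 1 s,
              C₄ * ((n j - n (j - 1) : ℕ) : ℝ) ^ (-(d : ℝ) / 2) *
                Real.exp (-c₄ * ‖z j - z (j - 1)‖ ^ 2 / ((n j - n (j - 1) : ℕ) : ℝ)) :=
  stmt_19_general μ τ K hK hGibbs R hR hdist C₂ c₂ hC₂ hc₂ hLD hanti

end
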